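/- arXiv:1103.2849 — 3 statements merged into one kernel-verified Lean document; each statement's English description precedes it below -/
import Mathlib

section
/- The Möbius function of the partition lattice evaluated between a partition x and a coarser partition t = {T_1,...,T_k} equals (-1)^{|x|+|t|} (n_1-1)!···(n_k-1)!, where n_i is the number of blocks of x contained in T_i. -/
/-!
The Möbius function is the unique function with `μ(x, x) = 1` and `∑_{x ≤ y ≤ t} μ(x, y) = 0`
for `x < t`, so it suffices to check these relations for the claimed formula. Grouping the blocks
of `x` according to the blocks of a coarser `y` identifies the interval `[x, t]` with the interval
`[⊥, τ]` in the partition lattice of the set of blocks of `x`, where `τ` is induced by `t`, and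
`[⊥, τ]` is the product of the partition lattices of the blocks of `τ`. Up to the sign `(-1)^|x|`
the formula is a product of weights `-(n - 1)!` over blocks, so the sum factors over the blocks
of `τ`, and it remains to see that `∑_ρ ∏_{C ∈ ρ} -(|C| - 1)!` over all partitions `ρ` of a set
`T` vanishes when `|T| ≥ 2`: grouping the partitions by the block containing a fixed point gives
a recursion in `|T|`.
-/

open scoped Classical

open Finset Nat

namespace IncidenceAlgebra

variable {𝕜 α : Type*} [Ring 𝕜] [PartialOrder α] [LocallyFiniteOrder α] [DecidableEq α]

theorem mu_eq_of_sum_Icc_eq (f : α → α → 𝕜)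
    (hf : ∀ a b, a ≤ b → ∑ x ∈ Icc a b, f a x = if a = b then 1 else 0) {a b : α}
    (hab : a ≤ b) : mu 𝕜 a b = f a b := by
  let F : IncidenceAlgebra 𝕜 α := ⟨fun a b ↦ if a ≤ b then f a b else 0, fun _ _ h ↦ if_neg h⟩
  have hF : F * zeta 𝕜 = 1 := by
    ext a b hle
    rw [mul_apply, one_apply, ← hf a b hle]
    refine sum_congr rfl fun x hx ↦ ?_
    rw [mem_Icc] at hx
    simp [F, hx.1, hx.2]
  calc mu 𝕜 a b = (F * zeta 𝕜 * mu 𝕜 : IncidenceAlgebra 𝕜 α) a b := by rw [hF, one_mul]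
    _ = f a b := by rw [mul_assoc, zeta_mul_mu, mul_one]; exact if_pos hab

end IncidenceAlgebra

theorem sum_range_choose_smul_neg_factorial (N : ℕ) :
    ∑ m ∈ range (N + 1), N.choose m • (-(m ! : ℤ) * if N - m ≤ 1 then (-1) ^ (N - m) else 0) =
      if N + 1 ≤ 1 then (-1) ^ (N + 1) else 0 := by
  rcases N with _ | k
  · simp
  have hlow : ∑ m ∈ range k, (k + 1).choose m •
      (-(m ! : ℤ) * if k + 1 - m ≤ 1 then (-1) ^ (k + 1 - m) else 0) = 0 :=
    sum_eq_zero fun m hm ↦ by rw [if_neg (by grind), mul_zero, smul_zero]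
  rw [sum_range_succ, sum_range_succ, hlow]
  simp [Nat.choose_succ_self_right, factorial_succ]

namespace Finpartition

variable {α : Type*} [DecidableEq α] {s : Finset α}

theorem parts_avoid_of_mem {P : Finpartition s} {B : Finset α} (hB : B ∈ P.parts) :
    (P.avoid B).parts = P.parts.erase B := by
  ext C
  rw [mem_avoid, mem_erase]
  constructor
  · rintro ⟨D, hD, hDB, rfl⟩
    have hne : D ≠ B := fun h ↦ hDB h.le
    have hdis : Disjoint D B := P.disjoint hD hB hne
    rw [sdiff_eq_left.2 hdis]
    exact ⟨hne, hD⟩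
  · rintro ⟨hne, hC⟩
    have hdis : Disjoint C B := P.disjoint hC hB hne
    exact ⟨C, hC, fun hle ↦ P.ne_bot hC (hdis.eq_bot_of_le hle), sdiff_eq_left.2 hdis⟩

theorem eq_bot_iff_forall_card_eq_one {P : Finpartition s} :
    P = ⊥ ↔ ∀ T ∈ P.parts, #T = 1 := by
  constructor
  · rintro rfl T hT
    obtain ⟨b, -, rfl⟩ := mem_bot_iff.1 hT
    exact card_singleton b
  · refine fun h ↦ le_antisymm (fun A hA ↦ ?_) bot_le
    obtain ⟨b, rfl⟩ := card_eq_one.1 (h A hA)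
    exact ⟨{b}, mem_bot_iff.2 ⟨b, P.le hA (mem_singleton_self b), rfl⟩, le_rfl⟩

theorem parts_restrict_of_le {P Q : Finpartition s} (h : P ≤ Q) {T : Finset α}
    (hT : T ∈ Q.parts) : (P.restrict (Q.le hT)).parts = {C ∈ P.parts | C ⊆ T} := by
  ext C
  simp only [restrict, mem_erase, mem_image, mem_filter]
  constructor
  · rintro ⟨hC, D, hD, rfl⟩
    obtain ⟨T', hT', hDT'⟩ := h hD
    obtain ⟨b, hb⟩ := nonempty_iff_ne_empty.2 hC
    obtain rfl := Q.eq_of_mem_parts hT' hT (hDT' (mem_inter.1 hb).1) (mem_inter.1 hb).2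
    rw [inf_eq_left.2 hDT']
    exact ⟨hD, hDT'⟩
  · rintro ⟨hC, hCT⟩
    exact ⟨P.ne_bot hC, C, hC, inf_eq_left.2 hCT⟩

theorem bind_restrict_of_le {P Q : Finpartition s} (h : P ≤ Q) :
    Q.bind (fun _ hT ↦ P.restrict (Q.le hT)) = P := by
  refine Finpartition.ext (Finset.ext fun C ↦ ?_)
  rw [mem_bind]
  constructor
  · rintro ⟨T, hT, hC⟩
    rw [parts_restrict_of_le h hT] at hC
    exact (mem_filter.1 hC).1
  · intro hC
    obtain ⟨T, hT, hCT⟩ := h hC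
    exact ⟨T, hT, by rw [parts_restrict_of_le h hT]; exact mem_filter.2 ⟨hC, hCT⟩⟩

theorem bind_le {Q : Finpartition s} (R : ∀ T ∈ Q.parts, Finpartition T) : Q.bind R ≤ Q := by
  intro C hC
  obtain ⟨T, hT, hC⟩ := mem_bind.1 hC
  exact ⟨T, hT, (R T hT).le hC⟩

theorem restrict_bind {Q : Finpartition s} (R : ∀ T ∈ Q.parts, Finpartition T) {T : Finset α}
    (hT : T ∈ Q.parts) : (Q.bind R).restrict (Q.le hT) = R T hT := by
  refine Finpartition.ext (Finset.ext fun C ↦ ?_)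
  rw [parts_restrict_of_le (bind_le R) hT, mem_filter, mem_bind]
  constructor
  · rintro ⟨⟨T', hT', hC⟩, hCT⟩
    obtain ⟨b, hb⟩ := (R T' hT').nonempty_of_mem_parts hC
    obtain rfl := Q.eq_of_mem_parts hT' hT ((R T' hT').le hC hb) (hCT hb)
    exact hC
  · intro hC
    exact ⟨⟨T, hT, hC⟩, (R T hT).le hC⟩

theorem prod_bind_parts {M : Type*} [CommMonoid M] (f : Finset α → M) {Q : Finpartition s}
    (R : ∀ T ∈ Q.parts, Finpartition T) :
    ∏ C ∈ (Q.bind R).parts, f C = ∏ T ∈ Q.parts.attach, ∏ C ∈ (R T.1 T.2).parts, f C := by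
  rw [bind_parts, prod_biUnion]
  rintro ⟨T, hT⟩ - ⟨T', hT'⟩ - hne
  refine disjoint_left.2 fun C hC hC' ↦ (R T hT).ne_bot hC (le_bot_iff.1 ?_)
  exact (le_inf ((R T hT).le hC) ((R T' hT').le hC')).trans
    (Q.disjoint hT hT' (Subtype.coe_ne_coe.2 hne)).le_bot

theorem sum_le_prod_parts_eq_prod_sum {R : Type*} [CommSemiring R] (f : Finset α → R)
    (Q : Finpartition s) :
    ∑ P with P ≤ Q, ∏ C ∈ P.parts, f C =
      ∏ T ∈ Q.parts, ∑ ρ : Finpartition T, ∏ C ∈ ρ.parts, f C := by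
  rw [prod_sum]
  refine sum_bij' (fun P _ T hT ↦ P.restrict (Q.le hT)) (fun p _ ↦ Q.bind fun T hT ↦ p T hT)
    (fun _ _ ↦ mem_pi.2 fun _ _ ↦ mem_univ _) (fun _ _ ↦ mem_filter.2 ⟨mem_univ _, bind_le _⟩)
    (fun P hP ↦ bind_restrict_of_le (mem_filter.1 hP).2) (fun p _ ↦ ?_) (fun P hP ↦ ?_)
  · funext T hT
    exact restrict_bind _ hT
  · conv_lhs => rw [← bind_restrict_of_le (mem_filter.1 hP).2]
    rw [prod_bind_parts]

theorem sum_filter_part_eq_mul_sum {R : Type*} [CommSemiring R] (f : Finset α → R) {B : Finset α}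
    (hBs : B ⊆ s) {a : α} (ha : a ∈ B) :
    ∑ P : Finpartition s with P.part a = B, ∏ C ∈ P.parts, f C =
      f B * ∑ ρ : Finpartition (s \ B), ∏ C ∈ ρ.parts, f C := by
  have hB : B ≠ ⊥ := ne_empty_of_mem ha
  have hB_mem {P : Finpartition s} (hP : P ∈ univ.filter (·.part a = B)) : B ∈ P.parts :=
    (mem_filter.1 hP).2 ▸ P.part_mem.2 (hBs ha)
  have hB_not_mem (ρ : Finpartition (s \ B)) : B ∉ ρ.parts := fun h ↦
    (mem_sdiff.1 (ρ.le h ha)).2 ha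
  rw [mul_sum]
  refine sum_bij' (fun P _ ↦ P.avoid B)
    (fun ρ _ ↦ ρ.extend hB sdiff_disjoint (sdiff_sup_cancel hBs)) (fun _ _ ↦ mem_univ _)
    (fun ρ _ ↦ mem_filter.2 ⟨mem_univ _, (ρ.extend _ _ _).part_eq_of_mem (mem_insert_self _ _) ha⟩)
    (fun P hP ↦ ?_) (fun ρ _ ↦ ?_) (fun P hP ↦ ?_)
  · refine Finpartition.ext ?_
    rw [extend_parts, parts_avoid_of_mem (hB_mem hP), insert_erase (hB_mem hP)]
  · refine Finpartition.ext ?_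
    rw [parts_avoid_of_mem (mem_insert_self B ρ.parts), extend_parts, erase_insert (hB_not_mem ρ)]
  · rw [parts_avoid_of_mem (hB_mem hP), mul_prod_erase _ _ (hB_mem hP)]

theorem sum_prod_neg_factorial (T : Finset α) :
    ∑ ρ : Finpartition T, ∏ C ∈ ρ.parts, -((#C - 1)! : ℤ) = if #T ≤ 1 then (-1) ^ #T else 0 := by
  induction T using Finset.strongInduction with
  | H T ih =>
  rcases T.eq_empty_or_nonempty with rfl | ⟨a, ha⟩
  · have : Unique (Finpartition (∅ : Finset α)) := inferInstanceAs (Unique (Finpartition ⊥))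
    simp [parts_eq_empty_iff.2 (bot_eq_empty (α := α))]
  set N := #(T.erase a)
  have hfiber : ∀ D ∈ (T.erase a).powerset,
      ∑ ρ : Finpartition T with ρ.part a = insert a D, ∏ C ∈ ρ.parts, -((#C - 1)! : ℤ) =
        -((#D)! : ℤ) * if N - #D ≤ 1 then (-1) ^ (N - #D) else 0 := by
    intro D hD
    have haD : a ∉ D := notMem_mono (mem_powerset.1 hD) (notMem_erase a T)
    have hDT : insert a D ⊆ T := insert_subset ha ((mem_powerset.1 hD).trans (erase_subset a T))
    rw [sum_filter_part_eq_mul_sum _ hDT (mem_insert_self a D),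
      ih _ (sdiff_ssubset hDT (insert_nonempty a D)), card_sdiff_of_subset hDT,
      card_insert_of_notMem haD, ← card_erase_add_one ha, Nat.add_sub_cancel,
      Nat.add_sub_add_right]
  have hmaps : ∀ ρ ∈ (univ : Finset (Finpartition T)),
      ρ.part a ∈ (T.erase a).powerset.image (insert a) := fun ρ _ ↦
    mem_image.2 ⟨(ρ.part a).erase a, mem_powerset.2 (erase_subset_erase a (ρ.part_subset a)),
      insert_erase (ρ.mem_part_self.2 ha)⟩
  rw [← sum_fiberwise_of_maps_to hmaps, sum_image (insert_erase_invOn.2.injOn.mono fun D hD ↦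
      notMem_mono (mem_powerset.1 hD) (notMem_erase a T)), sum_congr rfl hfiber,
    sum_powerset_apply_card (fun m ↦ -(m ! : ℤ) * if N - m ≤ 1 then (-1) ^ (N - m) else 0),
    ← card_erase_add_one ha]
  exact sum_range_choose_smul_neg_factorial N

theorem sum_le_prod_neg_factorial (Q : Finpartition s) :
    ∑ P with P ≤ Q, ∏ C ∈ P.parts, -((#C - 1)! : ℤ) = if Q = ⊥ then (-1) ^ #s else 0 := by
  rw [sum_le_prod_parts_eq_prod_sum, prod_congr rfl fun T _ ↦ sum_prod_neg_factorial T]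
  split_ifs with hQ
  · have hQ1 := eq_bot_iff_forall_card_eq_one.1 hQ
    rw [prod_congr rfl fun T hT ↦ if_pos (hQ1 T hT).le, prod_pow_eq_pow_sum, sum_card_parts]
  · obtain ⟨T, hT, hT1⟩ : ∃ T ∈ Q.parts, #T ≠ 1 := by
      simpa [eq_bot_iff_forall_card_eq_one] using hQ
    have hT0 := card_pos.2 (Q.nonempty_of_mem_parts hT)
    exact prod_eq_zero hT (if_neg (by omega))

theorem sup_filter_subset_of_le {P Q : Finpartition s} (h : P ≤ Q) {T : Finset α}
    (hT : T ∈ Q.parts) : {C ∈ P.parts | C ⊆ T}.sup id = T :=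
  parts_restrict_of_le h hT ▸ (P.restrict (Q.le hT)).sup_parts

/-- The blocks of `P` grouped according to the block of `Q` containing them. Together with
`coarsen` it identifies the interval `[P, ⊤]` with the partition lattice of `P.parts`. -/
def blockPartition {P Q : Finpartition s} (h : P ≤ Q) : Finpartition P.parts :=
  ofExistsUnique (Q.parts.image fun T ↦ {C ∈ P.parts | C ⊆ T})
    (by
      simp only [mem_image]
      rintro _ ⟨T, -, rfl⟩
      exact filter_subset _ _)
    (by
      intro C hC
      obtain ⟨T, hT, hCT⟩ := h hC
      refine ⟨_, ⟨mem_image_of_mem _ hT, mem_filter.2 ⟨hC, hCT⟩⟩, ?_⟩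
      rintro _ ⟨hX, hCX⟩
      obtain ⟨T', hT', rfl⟩ := mem_image.1 hX
      obtain ⟨b, hb⟩ := P.nonempty_of_mem_parts hC
      rw [Q.eq_of_mem_parts hT' hT ((mem_filter.1 hCX).2 hb) (hCT hb)])
    (by
      rw [mem_image]
      rintro ⟨T, hT, hempty⟩
      have := sup_filter_subset_of_le h hT
      rw [hempty, sup_empty] at this
      exact Q.ne_bot hT this.symm)

theorem parts_blockPartition {P Q : Finpartition s} (h : P ≤ Q) :
    (blockPartition h).parts = Q.parts.image fun T ↦ {C ∈ P.parts | C ⊆ T} := rfl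

theorem prod_parts_blockPartition {M : Type*} [CommMonoid M] (f : Finset (Finset α) → M)
    {P Q : Finpartition s} (h : P ≤ Q) :
    ∏ X ∈ (blockPartition h).parts, f X = ∏ T ∈ Q.parts, f {C ∈ P.parts | C ⊆ T} := by
  refine prod_image fun T hT T' hT' hTT' ↦ ?_
  rw [← sup_filter_subset_of_le h hT, ← sup_filter_subset_of_le h hT']
  exact congrArg (sup · id) hTT'

def coarsen (P : Finpartition s) (π : Finpartition P.parts) : Finpartition s :=
  ofExistsUnique (π.parts.image (·.sup id))
    (by
      simp only [mem_image]
      rintro _ ⟨X, hX, rfl⟩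
      exact Finset.sup_le fun C hC ↦ P.le (π.le hX hC))
    (by
      intro b hb
      obtain ⟨C, hC, hbC⟩ := P.exists_mem hb
      obtain ⟨X, hX, hCX⟩ := π.exists_mem hC
      refine ⟨X.sup id, ⟨mem_image_of_mem _ hX, (mem_sup (f := id)).2 ⟨C, hCX, hbC⟩⟩, ?_⟩
      rintro _ ⟨hY, hbY⟩
      obtain ⟨X', hX', rfl⟩ := mem_image.1 hY
      obtain ⟨C', hC'X', hbC'⟩ := mem_sup.1 hbY
      obtain rfl := P.eq_of_mem_parts (π.le hX' hC'X') hC hbC' hbC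
      rw [π.eq_of_mem_parts hX' hX hC'X' hCX])
    (by
      rw [mem_image]
      rintro ⟨X, hX, hempty⟩
      obtain ⟨C, hCX⟩ := π.nonempty_of_mem_parts hX
      obtain ⟨b, hbC⟩ := P.nonempty_of_mem_parts (π.le hX hCX)
      exact ne_empty_of_mem ((mem_sup (f := id)).2 ⟨C, hCX, hbC⟩) hempty)

theorem parts_coarsen (P : Finpartition s) (π : Finpartition P.parts) :
    (P.coarsen π).parts = π.parts.image (·.sup id) := rfl

theorem le_coarsen (P : Finpartition s) (π : Finpartition P.parts) : P ≤ P.coarsen π := by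
  intro C hC
  obtain ⟨X, hX, hCX⟩ := π.exists_mem hC
  exact ⟨X.sup id, mem_image_of_mem _ hX, le_sup (f := id) hCX⟩

theorem coarsen_mono (P : Finpartition s) {π π' : Finpartition P.parts} (h : π ≤ π') :
    P.coarsen π ≤ P.coarsen π' := by
  rintro _ hY
  obtain ⟨X, hX, rfl⟩ := mem_image.1 hY
  obtain ⟨X', hX', hXX'⟩ := h hX
  exact ⟨X'.sup id, mem_image_of_mem _ hX', sup_mono hXX'⟩

theorem blockPartition_mono {P Q Q' : Finpartition s} (h : P ≤ Q) (h' : P ≤ Q') (hQ : Q ≤ Q') :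
    blockPartition h ≤ blockPartition h' := by
  rintro _ hX
  obtain ⟨T, hT, rfl⟩ := mem_image.1 hX
  obtain ⟨T', hT', hTT'⟩ := hQ hT
  exact ⟨_, mem_image_of_mem _ hT', fun C hC ↦
    mem_filter.2 ⟨(mem_filter.1 hC).1, (mem_filter.1 hC).2.trans hTT'⟩⟩

theorem coarsen_blockPartition {P Q : Finpartition s} (h : P ≤ Q) :
    P.coarsen (blockPartition h) = Q := by
  refine Finpartition.ext ?_
  rw [parts_coarsen, parts_blockPartition, image_image]
  exact (image_congr fun T hT ↦ sup_filter_subset_of_le h hT).trans image_id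

theorem filter_subset_sup_eq (P : Finpartition s) {π : Finpartition P.parts}
    {X : Finset (Finset α)} (hX : X ∈ π.parts) : {C ∈ P.parts | C ⊆ X.sup id} = X := by
  ext C
  rw [mem_filter]
  constructor
  · rintro ⟨hC, hCX⟩
    obtain ⟨b, hb⟩ := P.nonempty_of_mem_parts hC
    obtain ⟨C', hC'X, hbC'⟩ := mem_sup.1 (hCX hb)
    rwa [P.eq_of_mem_parts hC (π.le hX hC'X) hb hbC']
  · exact fun hCX ↦ ⟨π.le hX hCX, le_sup (f := id) hCX⟩

theorem blockPartition_coarsen (P : Finpartition s) (π : Finpartition P.parts) :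
    blockPartition (P.le_coarsen π) = π := by
  refine Finpartition.ext ?_
  rw [parts_blockPartition, parts_coarsen, image_image]
  exact (image_congr fun X hX ↦ P.filter_subset_sup_eq hX).trans image_id

theorem filter_subset_eq_singleton (P : Finpartition s) {T : Finset α} (hT : T ∈ P.parts) :
    {C ∈ P.parts | C ⊆ T} = {T} := by
  ext C
  rw [mem_filter, mem_singleton]
  constructor
  · rintro ⟨hC, hCT⟩
    obtain ⟨b, hb⟩ := P.nonempty_of_mem_parts hC
    exact P.eq_of_mem_parts hC hT hb (hCT hb)
  · rintro rfl
    exact ⟨hT, subset_rfl⟩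

theorem blockPartition_self (P : Finpartition s) : blockPartition (le_refl P) = ⊥ := by
  refine eq_bot_iff_forall_card_eq_one.2 fun X hX ↦ ?_
  obtain ⟨T, hT, rfl⟩ := mem_image.1 hX
  rw [P.filter_subset_eq_singleton hT, card_singleton]

theorem blockPartition_eq_bot_iff {P Q : Finpartition s} (h : P ≤ Q) :
    blockPartition h = ⊥ ↔ P = Q := by
  constructor
  · intro hbot
    rw [← coarsen_blockPartition h, hbot, ← blockPartition_self, coarsen_blockPartition]
  · rintro rfl
    exact blockPartition_self P

theorem sum_Icc_prod_neg_factorial [LocallyFiniteOrder (Finpartition s)] {P Q : Finpartition s}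
    (h : P ≤ Q) :
    ∑ R ∈ Icc P Q, ∏ T ∈ R.parts, -((#{C ∈ P.parts | C ⊆ T} - 1)! : ℤ) =
      if P = Q then (-1) ^ #P.parts else 0 := by
  simp only [← blockPartition_eq_bot_iff h]
  rw [← sum_le_prod_neg_factorial]
  refine sum_bij' (fun R hR ↦ blockPartition (mem_Icc.1 hR).1) (fun π _ ↦ P.coarsen π)
    (fun R hR ↦ mem_filter.2 ⟨mem_univ _, blockPartition_mono _ h (mem_Icc.1 hR).2⟩)
    (fun π hπ ↦ mem_Icc.2 ⟨P.le_coarsen π, ?_⟩)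
    (fun R _ ↦ coarsen_blockPartition _) (fun π _ ↦ blockPartition_coarsen P π)
    (fun R _ ↦ (prod_parts_blockPartition (fun X ↦ -((#X - 1)! : ℤ)) _).symm)
  rw [← coarsen_blockPartition h]
  exact P.coarsen_mono (mem_filter.1 hπ).2

end Finpartition

/-- The Möbius function of the lattice of set partitions of a finite
set, evaluated between a partition `x` and a coarser partition `t = {T_1,…,T_k}`,
equals `(-1)^{|x|+|t|} (n_1-1)!⋯(n_k-1)!`, where `n_i` is the number of blocks of `x`
contained in the block `T_i` of `t`. -/
theorem mu_partition_lattice {α : Type*} [DecidableEq α] (s : Finset α) :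
    letI : LocallyFiniteOrder (Finpartition s) := Fintype.toLocallyFiniteOrder
    ∀ x t : Finpartition s, x ≤ t →
      IncidenceAlgebra.mu ℤ x t =
        (-1) ^ (x.parts.card + t.parts.card) *
          ∏ T ∈ t.parts,
            (Nat.factorial ((x.parts.filter (fun B => B ⊆ T)).card - 1) : ℤ) := by
  let _ : LocallyFiniteOrder (Finpartition s) := Fintype.toLocallyFiniteOrder
  intro x t hxt
  apply IncidenceAlgebra.mu_eq_of_sum_Icc_eq _ _ hxt
  intro P Q hPQ
  have hsign (R : Finpartition s) : (-1) ^ (#P.parts + #R.parts) *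
      ∏ T ∈ R.parts, ((#{C ∈ P.parts | C ⊆ T} - 1)! : ℤ) =
        (-1) ^ #P.parts * ∏ T ∈ R.parts, -((#{C ∈ P.parts | C ⊆ T} - 1)! : ℤ) := by
    rw [prod_neg, pow_add, mul_assoc]
  rw [sum_congr rfl fun R _ ↦ hsign R, ← mul_sum, Finpartition.sum_Icc_prod_neg_factorial hPQ,
    mul_ite, ← pow_add, Even.neg_one_pow ⟨_, rfl⟩, mul_zero]
end

section
/- Feynman diagram expansion: for a unital linear form ρ on a graded connected cocommutative Hopf algebra H with convolution logarithm τ, and any element X of positive degree, ρ(X) = Σ_{k≥1} (1/k!) τ^{⊗k}(Δ̄^{[k]}(X)), where Δ̄^{[k]} denotes the iterated reduced coproduct. -/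
/-! Since `τ 1 = 0`, the terms `x ⊗ 1 + 1 ⊗ x` of `Δ x` contribute nothing to `τ ∗ σ` whenever
`σ 1 = 0`, so inductively `τ^{∗(j+1)} = τ^{⊗(j+1)} ∘ Δ̄^{[j+1]}`. The degreewise exponential
series for `ρ X` thus becomes the claimed sum plus its `k = 0` term `ε X`, which vanishes because
the counit of a graded coalgebra is zero in positive degree. -/

open TensorProduct

/-- The convolution product `ρ ∗ μ := (ρ ⊗ μ) ∘ Δ` of linear forms. -/
noncomputable def convProd {k H : Type*} [Field k] [AddCommGroup H] [Module k H]
    [Coalgebra k H] (ρ μ : H →ₗ[k] k) : H →ₗ[k] k :=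
  LinearMap.mul' k k ∘ₗ TensorProduct.map ρ μ ∘ₗ Coalgebra.comul

/-- Convolution powers `f^{∗n}`, with `f^{∗0} = ε` the counit. -/
noncomputable def convPow {k H : Type*} [Field k] [AddCommGroup H] [Module k H]
    [Coalgebra k H] (f : H →ₗ[k] k) : ℕ → (H →ₗ[k] k)
  | 0 => Coalgebra.counit
  | n + 1 => convProd f (convPow f n)

/-- The reduced coproduct `Δ̄(x) = Δ(x) - x ⊗ 1 - 1 ⊗ x`. -/
noncomputable def redComul {k H : Type*} [Field k] [Ring H] [Module k H]
    [Coalgebra k H] : H →ₗ[k] H ⊗[k] H :=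
  Coalgebra.comul - ((TensorProduct.mk k H H).flip 1 + TensorProduct.mk k H H 1)

/-- `redConvPow τ j = τ^{⊗(j+1)} ∘ Δ̄^{[j+1]}` : the composite of the `(j+1)`-fold
iterated reduced coproduct `Δ̄^{[j+1]}` (defined recursively from `Δ̄`) with the
tensor power `τ^{⊗(j+1)}` of the form `τ`. -/
noncomputable def redConvPow {k H : Type*} [Field k] [Ring H] [Module k H]
    [Coalgebra k H] (τ : H →ₗ[k] k) : ℕ → (H →ₗ[k] k)
  | 0 => τ
  | j + 1 => LinearMap.mul' k k ∘ₗ TensorProduct.map τ (redConvPow τ j) ∘ₗ redComul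

section DirectSumDecomposition

variable {ι κ M σ : Type*} [DecidableEq ι] [AddCommMonoid M] [SetLike σ M]
  [AddSubmonoidClass σ M] (ℳ : ι → σ) [DirectSum.Decomposition ℳ]

theorem DirectSum.coe_decompose_sum_eq_single {s : Finset κ} {d : κ → ι} {y : κ → M}
    (hy : ∀ i ∈ s, y i ∈ ℳ (d i)) {i₀ : κ} (hi₀ : i₀ ∈ s)
    (hd : ∀ i ∈ s, d i = d i₀ → i = i₀) :
    (DirectSum.decompose ℳ (∑ i ∈ s, y i) (d i₀) : M) = y i₀ := by
  rw [DirectSum.decompose_sum, DFinsupp.finsetSum_apply, AddSubmonoidClass.coe_finsetSum,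
    Finset.sum_eq_single_of_mem i₀ hi₀, DirectSum.decompose_of_mem_same ℳ (hy i₀ hi₀)]
  intro i hi hne
  exact DirectSum.decompose_of_mem_ne ℳ (hy i hi) fun h => hne (hd i hi h)

end DirectSumDecomposition

section TensorProduct

variable {R M N : Type*} [CommSemiring R] [AddCommMonoid M] [Module R M]
  [AddCommMonoid N] [Module R N]

theorem TensorProduct.lid_rTensor_mem_of_mem_range_map (f : M →ₗ[R] R)
    {P : Submodule R M} {Q : Submodule R N} {t : M ⊗[R] N}
    (ht : t ∈ LinearMap.range (map P.subtype Q.subtype)) :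
    TensorProduct.lid R N (f.rTensor N t) ∈ Q := by
  obtain ⟨u, rfl⟩ := ht
  induction u using TensorProduct.induction_on with
  | zero => simp
  | tmul a b => simpa using Q.smul_mem _ b.2
  | add u v hu hv => simpa only [map_add] using Q.add_mem hu hv

theorem TensorProduct.rid_lTensor_mem_of_mem_range_map (g : N →ₗ[R] R)
    {P : Submodule R M} {Q : Submodule R N} {t : M ⊗[R] N}
    (ht : t ∈ LinearMap.range (map P.subtype Q.subtype)) :
    TensorProduct.rid R M (g.lTensor M t) ∈ P := by
  obtain ⟨u, rfl⟩ := ht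
  induction u using TensorProduct.induction_on with
  | zero => simp
  | tmul a b => simpa using P.smul_mem _ a.2
  | add u v hu hv => simpa only [map_add] using P.add_mem hu hv

theorem TensorProduct.apply_lid_rTensor_eq_apply_rid_lTensor (f : M →ₗ[R] R) (g : N →ₗ[R] R)
    (t : M ⊗[R] N) :
    g (TensorProduct.lid R N (f.rTensor N t)) = f (TensorProduct.rid R M (g.lTensor M t)) := by
  induction t using TensorProduct.induction_on with
  | zero => simp
  | tmul a b => simp [mul_comm]
  | add u v hu hv => simp only [map_add, hu, hv]

end TensorProduct

section GradedCoalgebra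

open Finset.HasAntidiagonal

variable {R C : Type*} [CommSemiring R] [AddCommMonoid C] [Module R C] [Coalgebra R C]
  (𝒜 : ℕ → Submodule R C) [DirectSum.Decomposition 𝒜]

/-- In a graded coalgebra the counit vanishes in positive degrees: writing
`Δ x = ∑ t_{p,q}` with `t_{p,q} ∈ 𝒜 p ⊗ 𝒜 q`, the two counit axioms kill the extreme terms
`t_{m,0}` and `t_{0,m}` after one counit is applied, and the middle terms have
`0 < p < m`, where induction applies. -/
theorem Coalgebra.counit_eq_zero_of_mem_of_pos
    (hΔ : ∀ n : ℕ, ∀ x ∈ 𝒜 n, Coalgebra.comul (R := R) x ∈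
      ⨆ pq ∈ antidiagonal n, LinearMap.range (map (𝒜 pq.1).subtype (𝒜 pq.2).subtype)) :
    ∀ m : ℕ, 0 < m → ∀ x ∈ 𝒜 m, Coalgebra.counit (R := R) x = 0 := by
  intro m
  induction m using Nat.strong_induction_on with
  | _ m ih =>
  intro hm x hx
  obtain ⟨t, ht⟩ := (Submodule.mem_iSup_finset_iff_exists_sum _ _).1 (hΔ m x hx)
  set ε := Coalgebra.counit (R := R) (A := C)
  let left := (_root_.TensorProduct.lid R C).toLinearMap ∘ₗ ε.rTensor C
  let right := (_root_.TensorProduct.rid R C).toLinearMap ∘ₗ ε.lTensor C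
  have hm0 : (m, 0) ∈ antidiagonal m := by simp
  have h0m : (0, m) ∈ antidiagonal m := by simp
  have hleft : ∑ pq ∈ antidiagonal m, left (t pq) = x := by simp [left, ε, ← map_sum, ht]
  have hright : ∑ pq ∈ antidiagonal m, right (t pq) = x := by simp [right, ε, ← map_sum, ht]
  have hleft_zero : left (t (m, 0)) = 0 := by
    rw [← DirectSum.decompose_of_mem_ne 𝒜 hx hm.ne', ← hleft]
    exact (DirectSum.coe_decompose_sum_eq_single 𝒜 (d := Prod.snd)
      (fun pq _ => lid_rTensor_mem_of_mem_range_map ε (t pq).2) hm0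
      (fun pq hpq => (antidiagonal_congr' hpq hm0).2)).symm
  have hright_zero : right (t (0, m)) = 0 := by
    rw [← DirectSum.decompose_of_mem_ne 𝒜 hx hm.ne', ← hright]
    exact (DirectSum.coe_decompose_sum_eq_single 𝒜 (d := Prod.fst)
      (fun pq _ => rid_lTensor_mem_of_mem_range_map ε (t pq).2) h0m
      (fun pq hpq => (antidiagonal_congr hpq h0m).2)).symm
  have hterm : ∀ pq ∈ antidiagonal m, ε (left (t pq)) = 0 := by
    intro pq hpq
    by_cases hq : pq.2 = 0
    · rw [(antidiagonal_congr' hpq hm0).2 hq, hleft_zero, map_zero]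
    rw [show ε (left (t pq)) = ε (right (t pq)) from apply_lid_rTensor_eq_apply_rid_lTensor ε ε _]
    by_cases hp : pq.1 = 0
    · rw [(antidiagonal_congr hpq h0m).2 hp, hright_zero, map_zero]
    have hpm : pq.1 < m := by rw [mem_antidiagonal] at hpq; omega
    exact ih pq.1 hpm (Nat.pos_of_ne_zero hp) _ (rid_lTensor_mem_of_mem_range_map ε (t pq).2)
  rw [← hleft, map_sum]
  exact Finset.sum_eq_zero hterm

end GradedCoalgebra

section ConvolutionPowers

theorem convProd_counit {k H : Type*} [Field k] [AddCommGroup H] [Module k H] [Coalgebra k H]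
    (τ : H →ₗ[k] k) : convProd τ Coalgebra.counit = τ := by
  ext x
  simp [convProd, ← LinearMap.rTensor_comp_lTensor]

variable {k H : Type*} [Field k] [Ring H] [Bialgebra k H]

theorem comul_eq_redComul_add (x : H) :
    Coalgebra.comul (R := k) x = redComul x + (x ⊗ₜ[k] 1 + 1 ⊗ₜ[k] x) := by
  simp [redComul]

theorem redComul_one : redComul (k := k) (H := H) 1 = -(1 ⊗ₜ[k] 1) := by
  simp [redComul, Algebra.TensorProduct.one_def]

theorem redConvPow_apply_one {τ : H →ₗ[k] k} (hτ : τ 1 = 0) (n : ℕ) : redConvPow τ n 1 = 0 := by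
  cases n with
  | zero => exact hτ
  | succ n => simp [redConvPow, redComul_one, hτ]

theorem convProd_eq_mul'_map_redComul {τ σ : H →ₗ[k] k} (hτ : τ 1 = 0) (hσ : σ 1 = 0) :
    convProd τ σ = LinearMap.mul' k k ∘ₗ map τ σ ∘ₗ redComul := by
  ext x
  simp [convProd, comul_eq_redComul_add x, hτ, hσ]

theorem convPow_succ_eq_redConvPow {τ : H →ₗ[k] k} (hτ : τ 1 = 0) :
    ∀ n : ℕ, convPow τ (n + 1) = redConvPow τ n
  | 0 => convProd_counit τ
  | n + 1 => by
    rw [convPow, convPow_succ_eq_redConvPow hτ n,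
      convProd_eq_mul'_map_redComul hτ (redConvPow_apply_one hτ n), redConvPow]

end ConvolutionPowers

theorem feynman_diagram_expansion_general {k H : Type*} [Field k]
    [Ring H] [HopfAlgebra k H] (𝒜 : ℕ → Submodule k H) [GradedRing 𝒜]
    (hgradedComul : ∀ n : ℕ, ∀ x ∈ 𝒜 n,
      Coalgebra.comul (R := k) x ∈
        ⨆ pq ∈ Finset.HasAntidiagonal.antidiagonal n,
          LinearMap.range (TensorProduct.map (𝒜 pq.1).subtype (𝒜 pq.2).subtype))
    (ρ τ : H →ₗ[k] k) (hτ : τ 1 = 0)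
    (hlog : ∀ m : ℕ, ∀ x ∈ 𝒜 m,
      ρ x = ∑ n ∈ Finset.range (m + 1), (Nat.factorial n : k)⁻¹ • convPow τ n x) :
    ∀ m : ℕ, 0 < m → ∀ X ∈ 𝒜 m,
      ρ X = ∑ j ∈ Finset.range m,
        (Nat.factorial (j + 1) : k)⁻¹ • redConvPow τ j X := by
  intro m hm X hX
  have hcounit : Coalgebra.counit (R := k) X = 0 :=
    Coalgebra.counit_eq_zero_of_mem_of_pos 𝒜 hgradedComul m hm X hX
  rw [hlog m X hX, Finset.sum_range_succ']
  simp only [convPow_succ_eq_redConvPow hτ]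
  rw [convPow, hcounit, smul_zero, add_zero]

/-- Feynman diagram expansion. Let `H` be a graded connected
cocommutative Hopf algebra over a field of characteristic zero, `ρ` a unital form
with convolution logarithm `τ` (so `τ(1) = 0` and `ρ = exp^∗(τ)`, encoded degreewise
by the finite exponential sums). Then for every homogeneous `X` of positive degree
`m`, `ρ(X) = Σ_{k≥1} (1/k!) τ^{⊗k}(Δ̄^{[k]}(X))`, the sum being finite (truncated at
`k = m`) by graduation. -/
theorem feynman_diagram_expansion {k H : Type*} [Field k] [CharZero k]
    [Ring H] [HopfAlgebra k H] (𝒜 : ℕ → Submodule k H) [GradedRing 𝒜]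
    (hconn : 𝒜 0 = Submodule.span k {(1 : H)})
    (hgradedComul : ∀ n : ℕ, ∀ x ∈ 𝒜 n,
      Coalgebra.comul (R := k) x ∈
        ⨆ pq ∈ Finset.HasAntidiagonal.antidiagonal n,
          LinearMap.range (TensorProduct.map (𝒜 pq.1).subtype (𝒜 pq.2).subtype))
    (hcocomm : ∀ x : H,
      (TensorProduct.comm k H H) (Coalgebra.comul (R := k) x) = Coalgebra.comul x)
    (ρ τ : H →ₗ[k] k) (hρ : ρ 1 = 1) (hτ : τ 1 = 0)
    (hlog : ∀ m : ℕ, ∀ x ∈ 𝒜 m,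
      ρ x = ∑ n ∈ Finset.range (m + 1), (Nat.factorial n : k)⁻¹ • convPow τ n x) :
    ∀ m : ℕ, 0 < m → ∀ X ∈ 𝒜 m,
      ρ X = ∑ j ∈ Finset.range m,
        (Nat.factorial (j + 1) : k)⁻¹ • redConvPow τ j X :=
  feynman_diagram_expansion_general 𝒜 hgradedComul ρ τ hτ hlog
end

section
/- Multiplicativity of symmetry factors over connected components (commutative case): let H = k[φ(x_i) : i ∈ ℕ] with primitive generators, and let Ψ = Ψ_T · Ψ_V be a monomial that factors as a product of monomials with disjoint supports T and V. For any multiset Γ = {S_1,...,S_k} of monomials with supports contained in T and Γ' = {S'_1,...,S'_l} with supports in V, the coefficient of the symmetrized tensor [S_1|...|S_k|S'_1|...|S'_l] in G(Ψ) = Σ_m Δ̄^{[m]}(Ψ)/m! equals the product of the coefficient of [S_1|...|S_k] in G(Ψ_T) and the coefficient of [S'_1|...|S'_l] in G(Ψ_V). -/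
/-!
Both symmetry factors are explicit. Iterating the reduced coproduct on a monomial `x^e` of the
primitively generated polynomial algebra produces multinomial coefficients: for nonzero exponents
`d₁, …, dₘ` the coefficient of `x^{d₁} ⊗ ⋯ ⊗ x^{dₘ}` in `Δ̄^{[m]}(x^e)` is `e! / (d₁! ⋯ dₘ!)` when
`d₁ + ⋯ + dₘ = e` and `0` otherwise, where `e! = ∏ᵢ (eᵢ)!`. The stabiliser of a list has order
`∏ₐ (mult a)!`. For disjoint supports `(e₁ + e₂)! = e₁! e₂!`, a sum of exponents supported in `T`
plus one supported in `V` equals `e₁ + e₂` only if both parts match, and the two lists share no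
element, so every factor splits.
-/

open TensorProduct MvPolynomial
open scoped Classical

/-- The coproduct on the polynomial Hopf algebra `ℚ[φ(x_0), φ(x_1), …]` making each
generator `X i` primitive: `Δ(X i) = X i ⊗ 1 + 1 ⊗ X i`. -/
noncomputable def polyComul :
    MvPolynomial ℕ ℚ →ₐ[ℚ] MvPolynomial ℕ ℚ ⊗[ℚ] MvPolynomial ℕ ℚ :=
  MvPolynomial.aeval fun i => X i ⊗ₜ[ℚ] (1 : MvPolynomial ℕ ℚ) + 1 ⊗ₜ[ℚ] X i

/-- The reduced coproduct `Δ̄(x) = Δ(x) - x ⊗ 1 - 1 ⊗ x`. -/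
noncomputable def polyRedComul :
    MvPolynomial ℕ ℚ →ₗ[ℚ] MvPolynomial ℕ ℚ ⊗[ℚ] MvPolynomial ℕ ℚ :=
  polyComul.toLinearMap -
    ((TensorProduct.mk ℚ (MvPolynomial ℕ ℚ) (MvPolynomial ℕ ℚ)).flip 1 +
      TensorProduct.mk ℚ (MvPolynomial ℕ ℚ) (MvPolynomial ℕ ℚ) 1)

/-- For a list `L = [d_1, …, d_m]` of exponent vectors (encoding the monomials
`S_1, …, S_m`), `tensorCoeff L` is the linear form
`(coeff d_1 ⊗ ⋯ ⊗ coeff d_m) ∘ Δ̄^{[m]}` extracting the coefficient of the plain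
tensor `S_1 ⊗ ⋯ ⊗ S_m` in the `m`-fold iterated reduced coproduct. -/
noncomputable def tensorCoeff : List (ℕ →₀ ℕ) → (MvPolynomial ℕ ℚ →ₗ[ℚ] ℚ)
  | [] => 0
  | [d] => lcoeff ℚ d
  | d :: e :: L =>
    LinearMap.mul' ℚ ℚ ∘ₗ
      TensorProduct.map (lcoeff ℚ d) (tensorCoeff (e :: L)) ∘ₗ polyRedComul

/-- The size of the stabilizer of the list `L` under permutations, i.e. the number
of permutations of `L` (with multiplicity) equal to `L`. -/
noncomputable def stabCard (L : List (ℕ →₀ ℕ)) : ℕ :=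
  (L.permutations.filter (· = L)).length

/-- The symmetry factor `s_Γ^Ψ`: the coefficient of the symmetrized tensor
`[S_1|…|S_m]` in the graphication `G(Ψ) = Σ_m Δ̄^{[m]}(Ψ)/m!`. Since `G(Ψ)` is a
symmetric tensor, this equals `m!/|Stab Γ|` times the coefficient of the plain
tensor `S_1 ⊗ ⋯ ⊗ S_m` in `Δ̄^{[m]}(Ψ)/m!`, i.e. `tensorCoeff Γ Ψ / |Stab Γ|`. -/
noncomputable def symFactor (L : List (ℕ →₀ ℕ)) (Ψ : MvPolynomial ℕ ℚ) : ℚ :=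
  tensorCoeff L Ψ / (stabCard L : ℚ)

open scoped Nat

namespace List

variable {α : Type*}

lemma permutations'_cons_perm (x : α) (l : List α) :
    (x :: l).permutations' ~
      (range (l.length + 1)).flatMap fun k => l.permutations'.map (·.insertIdx k x) := by
  rw [← Multiset.coe_eq_coe, permutations', ← Multiset.coe_bind, ← Multiset.coe_bind]
  have : ∀ M ∈ (l.permutations' : Multiset (List α)),
      (permutations'Aux x M : Multiset (List α)) =
        Multiset.map (M.insertIdx · x) (range (l.length + 1)) := by
    intro M hM
    rw [Multiset.mem_coe, mem_permutations'] at hM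
    rw [Multiset.map_coe, Multiset.coe_eq_coe, ← hM.length_eq]
    refine .of_eq (ext_getElem (by simp) fun n _ _ => ?_)
    simp [getElem_permutations'Aux]
  rw [Multiset.bind_congr this, Multiset.bind_map_comm]
  simp

variable [DecidableEq α]

lemma count_map_insertIdx (x : α) {k : ℕ} {P : List (List α)} (hP : ∀ M ∈ P, k ≤ M.length)
    (L : List α) :
    (P.map (·.insertIdx k x)).count L = if L[k]? = some x then P.count (L.eraseIdx k) else 0 := by
  split_ifs with h
  · obtain ⟨hk, hx⟩ := getElem?_eq_some_iff.1 h
    have hL : (L.eraseIdx k).insertIdx k x = L := hx ▸ insertIdx_eraseIdx_getElem hk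
    conv_lhs => rw [← hL]
    exact count_map_of_injective _ _ (insertIdx_injective k _) _
  · refine count_eq_zero.2 fun hL => h ?_
    obtain ⟨M, hM, rfl⟩ := mem_map.1 hL
    simp [getElem?_insertIdx_self, hP M hM]

lemma sum_map_range_ite_getElem?_eq_count (x : α) (L : List α) :
    ((range L.length).map fun k => if L[k]? = some x then 1 else 0).sum = L.count x := by
  induction L with
  | nil => simp
  | cons a L ih =>
    rw [length_cons, range_succ_eq_map, map_cons, sum_cons, map_map, count_cons, ← ih]
    by_cases h : a = x <;> simp [h, Function.comp_def, add_comm]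

lemma prod_factorial_count_cons (x : α) (l : List α) :
    ∏ a ∈ (x :: l).toFinset, ((x :: l).count a)! =
      (x :: l).count x * ∏ a ∈ l.toFinset, (l.count a)! := by
  have hx : x ∈ (x :: l).toFinset := by simp
  have hsub : l.toFinset ⊆ (x :: l).toFinset := by
    rw [toFinset_cons]; exact Finset.subset_insert _ _
  rw [Finset.prod_subset (f := fun a => (l.count a)!) hsub fun a _ ha => by
      rw [count_eq_zero_of_not_mem (by simpa using ha), Nat.factorial_zero],
    ← Finset.mul_prod_erase _ _ hx, ← Finset.mul_prod_erase _ (fun a => (l.count a)!) hx,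
    count_cons_self, Nat.factorial_succ, mul_assoc]
  congr 2
  refine Finset.prod_congr rfl fun a ha => ?_
  rw [count_cons_of_ne (Finset.ne_of_mem_erase ha).symm]

/-- A copy of `x :: l` in `(x :: l).permutations'` arises by inserting `x`, at a position `k` of
`x :: l` holding an `x`, into a copy of `(x :: l).eraseIdx k` in `l.permutations'`; and
`(x :: l).eraseIdx k` is a rearrangement of `l`. -/
theorem count_self_permutations' (L : List α) :
    L.permutations'.count L = ∏ a ∈ L.toFinset, (L.count a)! := by
  induction h : L.length generalizing L with
  | zero => simp_all [length_eq_zero_iff]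
  | succ n ih =>
    obtain _ | ⟨x, l⟩ := L
    · simp at h
    have hP : ∀ M ∈ l.permutations', l.length ≤ M.length := fun M hM =>
      (mem_permutations'.1 hM).length_eq.ge
    have hK : ∀ k, (x :: l)[k]? = some x →
        l.permutations'.count ((x :: l).eraseIdx k) = ∏ a ∈ l.toFinset, (l.count a)! := by
      intro k hk
      obtain ⟨hk, hx⟩ := getElem?_eq_some_iff.1 hk
      have hperm := getElem_cons_eraseIdx_perm hk
      rw [hx, perm_cons] at hperm
      rw [(hperm.symm.permutations').count_eq, ih _ (by simp [hperm.length_eq]; simpa using h),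
        toFinset_eq_of_perm _ _ hperm]
      exact Finset.prod_congr rfl fun a _ => by rw [hperm.count_eq]
    rw [(permutations'_cons_perm x l).count_eq, count_flatMap, prod_factorial_count_cons,
      ← sum_map_range_ite_getElem?_eq_count, length_cons, ← sum_map_mul_right]
    congr 1
    refine map_congr_left fun k hk => ?_
    have hkl : k ≤ l.length := Nat.lt_succ_iff.1 (mem_range.1 hk)
    rw [Function.comp_apply, count_map_insertIdx x fun M hM => hkl.trans (hP M hM)]
    split_ifs with hx
    · rw [hK k hx, one_mul]
    · rw [zero_mul]

end List

open Finset in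
lemma Finsupp.sum_antidiagonal_single_add {α M : Type*} [DecidableEq α] [AddCommMonoid M]
    {a : α} {f : α →₀ ℕ} (ha : a ∉ f.support) (n : ℕ) (g : (α →₀ ℕ) × (α →₀ ℕ) → M) :
    ∑ r ∈ antidiagonal (single a n + f), g r =
      ∑ k ∈ range (n + 1), ∑ p ∈ antidiagonal f, g (single a k + p.1, single a (n - k) + p.2) := by
  have hfa : f a = 0 := notMem_support_iff.1 ha
  rw [eq_comm, ← sum_product' (s := range (n + 1)) (t := antidiagonal f)
    (f := fun k p => g (single a k + p.1, single a (n - k) + p.2))]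
  refine sum_nbij' (fun q => (single a q.1 + q.2.1, single a (n - q.1) + q.2.2))
    (fun r => (r.1 a, r.1.erase a, r.2.erase a)) ?_ ?_ ?_ ?_ (fun _ _ => rfl)
  · rintro ⟨k, p₁, p₂⟩ hq
    simp only [mem_product, mem_range, HasAntidiagonal.mem_antidiagonal] at hq ⊢
    rw [add_add_add_comm, ← single_add, Nat.add_sub_cancel' (by omega), hq.2]
  · rintro ⟨r₁, r₂⟩ hr
    simp only [mem_product, mem_range, HasAntidiagonal.mem_antidiagonal] at hr ⊢
    have := congr($hr a)
    simp only [add_apply, single_eq_same, hfa, add_zero] at this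
    refine ⟨by omega, ?_⟩
    rw [← erase_add, hr, erase_add, erase_single, erase_of_notMem_support ha, zero_add]
  · rintro ⟨k, p₁, p₂⟩ hq
    simp only [mem_product, mem_range, HasAntidiagonal.mem_antidiagonal] at hq
    have h₁ : p₁ a = 0 := by have := congr($(hq.2) a); simp only [add_apply] at this; omega
    have h₂ : p₂ a = 0 := by have := congr($(hq.2) a); simp only [add_apply] at this; omega
    simp only [add_apply, single_eq_same, h₁, add_zero, erase_add, erase_single, zero_add,
      erase_of_notMem_support (notMem_support_iff.2 h₁),
      erase_of_notMem_support (notMem_support_iff.2 h₂)]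
  · rintro ⟨r₁, r₂⟩ hr
    rw [HasAntidiagonal.mem_antidiagonal] at hr
    have := congr($hr a)
    simp only [add_apply, single_eq_same, hfa, add_zero] at this
    simp [← this, single_add_erase]

lemma Finsupp.support_list_sum_subset {α M : Type*} [AddCommMonoid M] {L : List (α →₀ M)}
    {s : Finset α} (h : ∀ d ∈ L, d.support ⊆ s) : L.sum.support ⊆ s := by
  have hmem : L.sum ∈ Finsupp.supported M ℕ (s : Set α) :=
    list_sum_mem fun d hd => (Finsupp.mem_supported ℕ d).2 (by exact_mod_cast h d hd)
  exact_mod_cast (Finsupp.mem_supported ℕ _).1 hmem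

lemma Finsupp.add_eq_add_iff_of_support_subset {α : Type*} {s₁ s₂ e₁ e₂ : α →₀ ℕ}
    (he : Disjoint e₁.support e₂.support) (h₁ : s₁.support ⊆ e₁.support)
    (h₂ : s₂.support ⊆ e₂.support) : s₁ + s₂ = e₁ + e₂ ↔ s₁ = e₁ ∧ s₂ = e₂ := by
  refine ⟨fun h => ?_, fun h => h.1 ▸ h.2 ▸ rfl⟩
  have key : ∀ i, s₁ i = e₁ i ∧ s₂ i = e₂ i := by
    intro i
    have hi := congr($h i)
    simp only [Finsupp.add_apply] at hi
    by_cases hi₁ : i ∈ e₁.support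
    · have hi₂ : i ∉ e₂.support := Finset.disjoint_left.1 he hi₁
      have : s₂ i = 0 := Finsupp.notMem_support_iff.1 fun h => hi₂ (h₂ h)
      have : e₂ i = 0 := Finsupp.notMem_support_iff.1 hi₂
      omega
    · have : s₁ i = 0 := Finsupp.notMem_support_iff.1 fun h => hi₁ (h₁ h)
      have : e₁ i = 0 := Finsupp.notMem_support_iff.1 hi₁
      omega
  exact ⟨Finsupp.ext fun i => (key i).1, Finsupp.ext fun i => (key i).2⟩

section FactorialProd

variable {α : Type*}

def factorialProd (d : α →₀ ℕ) : ℕ := d.prod fun _ n => n !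

lemma factorialProd_pos (d : α →₀ ℕ) : 0 < factorialProd d :=
  Finset.prod_pos fun _ _ => Nat.factorial_pos _

lemma factorialProd_zero : factorialProd (0 : α →₀ ℕ) = 1 := Finsupp.prod_zero_index

lemma factorialProd_single (a : α) (n : ℕ) : factorialProd (Finsupp.single a n) = n ! :=
  Finsupp.prod_single_index rfl

lemma factorialProd_add_of_disjoint {d₁ d₂ : α →₀ ℕ} (h : Disjoint d₁.support d₂.support) :
    factorialProd (d₁ + d₂) = factorialProd d₁ * factorialProd d₂ :=
  Finsupp.prod_add_index_of_disjoint h _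

end FactorialProd

lemma stabCard_eq_prod_factorial_count (L : List (ℕ →₀ ℕ)) :
    stabCard L = ∏ a ∈ L.toFinset, (L.count a)! := by
  rw [stabCard, ← List.count_self_permutations',
    ← (List.permutations_perm_permutations' L).count_eq, List.count_eq_length_filter]
  congr 2 with M
  by_cases h : M = L <;> simp [h]

lemma stabCard_append {L₁ L₂ : List (ℕ →₀ ℕ)} (h : L₁.Disjoint L₂) :
    stabCard (L₁ ++ L₂) = stabCard L₁ * stabCard L₂ := by
  simp only [stabCard_eq_prod_factorial_count, List.toFinset_append, List.count_append]
  rw [Finset.prod_union (List.disjoint_toFinset_iff_disjoint.2 h)]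
  congr 1 <;> refine Finset.prod_congr rfl fun a ha => ?_
  · rw [List.count_eq_zero_of_not_mem fun h₂ => h (List.mem_toFinset.1 ha) h₂, add_zero]
  · rw [List.count_eq_zero_of_not_mem fun h₁ => h h₁ (List.mem_toFinset.1 ha), zero_add]

lemma polyComul_X_pow (a n : ℕ) :
    polyComul (X a ^ n) = ∑ k ∈ Finset.range (n + 1),
      (n.choose k : ℚ) •
        ((X a ^ k : MvPolynomial ℕ ℚ) ⊗ₜ[ℚ] (X a ^ (n - k) : MvPolynomial ℕ ℚ)) := by
  rw [map_pow, polyComul, aeval_X, add_pow]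
  refine Finset.sum_congr rfl fun k _ => ?_
  rw [Algebra.TensorProduct.tmul_pow, Algebra.TensorProduct.tmul_pow, one_pow, one_pow,
    Algebra.TensorProduct.tmul_mul_tmul, mul_one, one_mul, mul_comm, ← nsmul_eq_mul,
    Nat.cast_smul_eq_nsmul]

open Finset HasAntidiagonal in
lemma polyComul_monomial (e : ℕ →₀ ℕ) :
    polyComul (monomial e 1) = ∑ p ∈ antidiagonal e,
      ((factorialProd e : ℚ) / (factorialProd p.1 * factorialProd p.2)) •
        (monomial p.1 (1 : ℚ) ⊗ₜ[ℚ] monomial p.2 (1 : ℚ)) := by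
  induction e using Finsupp.induction with
  | zero => simp [Algebra.TensorProduct.one_def, factorialProd_zero]
  | single_add a n f ha _ ih =>
    have hdisj : ∀ {g : ℕ →₀ ℕ}, g ≤ f → ∀ k : ℕ,
        Disjoint (Finsupp.single a k).support g.support :=
      fun hg k => disjoint_of_subset_left (Finsupp.support_single_subset (a := a) (b := k))
        (disjoint_singleton_left.2 fun h => ha (Finsupp.support_mono hg h))
    have hmul : monomial (Finsupp.single a n + f) (1 : ℚ) = X a ^ n * monomial f 1 := by
      rw [X_pow_eq_monomial, monomial_mul, one_mul]
    rw [hmul, map_mul, polyComul_X_pow, ih, sum_mul_sum, Finsupp.sum_antidiagonal_single_add ha]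
    refine sum_congr rfl fun k hk => sum_congr rfl fun p hp => ?_
    have hk : k ≤ n := Nat.lt_succ_iff.1 (mem_range.1 hk)
    rw [smul_mul_smul_comm, Algebra.TensorProduct.tmul_mul_tmul, X_pow_eq_monomial,
      X_pow_eq_monomial, monomial_mul, monomial_mul, one_mul,
      factorialProd_add_of_disjoint (hdisj le_rfl n),
      factorialProd_add_of_disjoint (hdisj (antidiagonal.fst_le hp) k),
      factorialProd_add_of_disjoint (hdisj (antidiagonal.snd_le hp) (n - k)),
      factorialProd_single, factorialProd_single, factorialProd_single, Nat.cast_choose ℚ hk]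
    congr 1
    push_cast
    ring

open Finset HasAntidiagonal in
lemma mul'_map_lcoeff_polyComul_monomial (d e : ℕ →₀ ℕ) (g : MvPolynomial ℕ ℚ →ₗ[ℚ] ℚ) :
    LinearMap.mul' ℚ ℚ (TensorProduct.map (lcoeff ℚ d) g (polyComul (monomial e 1))) =
      if d ≤ e then
        (factorialProd e : ℚ) / (factorialProd d * factorialProd (e - d)) * g (monomial (e - d) 1)
      else 0 := by
  simp only [polyComul_monomial, map_sum, map_smul, TensorProduct.map_tmul, LinearMap.mul'_apply,
    lcoeff_apply, coeff_monomial, smul_eq_mul, ite_mul, one_mul, zero_mul, mul_ite, mul_zero]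
  rw [← sum_filter, filter_fst_eq_antidiagonal e d]
  split_ifs <;> simp

lemma tensorCoeff_cons_cons_monomial {d : ℕ →₀ ℕ} (hd : d ≠ 0) (d' : ℕ →₀ ℕ)
    (L : List (ℕ →₀ ℕ)) (e : ℕ →₀ ℕ) :
    tensorCoeff (d :: d' :: L) (monomial e 1) =
      (if d ≤ e then (factorialProd e : ℚ) / (factorialProd d * factorialProd (e - d)) *
        tensorCoeff (d' :: L) (monomial (e - d) 1) else 0) -
      if d = e then tensorCoeff (d' :: L) (monomial 0 1) else 0 := by
  have hred : polyRedComul (monomial e 1) =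
      polyComul (monomial e 1) -
        (monomial e 1 ⊗ₜ[ℚ] monomial 0 1 + monomial 0 1 ⊗ₜ[ℚ] monomial e 1) := rfl
  rw [tensorCoeff, LinearMap.comp_apply, LinearMap.comp_apply, hred, map_sub, map_sub,
    mul'_map_lcoeff_polyComul_monomial]
  simp [coeff_monomial, coeff_one, hd.symm, @eq_comm _ e d]

theorem tensorCoeff_monomial :
    ∀ (L : List (ℕ →₀ ℕ)), L ≠ [] → (∀ d ∈ L, d ≠ 0) → ∀ e : ℕ →₀ ℕ,
      tensorCoeff L (monomial e 1) =
        if L.sum = e then (factorialProd e : ℚ) / (L.map factorialProd).prod else 0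
  | [d], _, _, e => by
    rw [tensorCoeff, lcoeff_apply, coeff_monomial]
    by_cases h : d = e
    · subst h
      simp [(factorialProd_pos d).ne']
    · simp [Ne.symm h, h]
  | d :: d' :: L, _, h0, e => by
    have hd : d ≠ 0 := h0 d List.mem_cons_self
    have h0' : ∀ x ∈ d' :: L, x ≠ 0 := fun x hx => h0 x (List.mem_cons_of_mem d hx)
    have hsum : (d' :: L).sum ≠ 0 := fun h =>
      h0' d' List.mem_cons_self (List.sum_eq_zero_iff.1 h d' List.mem_cons_self)
    rw [tensorCoeff_cons_cons_monomial hd, tensorCoeff_monomial _ (List.cons_ne_nil _ _) h0',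
      tensorCoeff_monomial _ (List.cons_ne_nil _ _) h0', if_neg hsum, ite_self, sub_zero,
      List.sum_cons (a := d), List.map_cons (a := d), List.prod_cons, Nat.cast_mul]
    by_cases he : d + (d' :: L).sum = e
    · subst he
      have hfp := factorialProd_pos (d' :: L).sum
      rw [if_pos le_self_add, add_tsub_cancel_left, if_pos rfl, if_pos rfl]
      field_simp
    · rw [if_neg he]
      split_ifs with hde hrest
      · exact absurd (by rw [hrest, add_tsub_cancel_of_le hde]) he
      · exact mul_zero _
      · rfl

/-- multiplicativity of symmetry factors over connected
components, commutative case. Let `Ψ = Ψ_T · Ψ_V` be a monomial factoring as a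
product of monomials with disjoint supports `T` and `V`. For any multiset (list)
`Γ = [S_1,…,S_k]` of nonempty monomials supported in `T` and `Γ' = [S'_1,…,S'_l]`
supported in `V`, the symmetry factor of the concatenation in `G(Ψ)` is the product
of the symmetry factors: `s_{Γ·Γ'}^Ψ = s_Γ^{Ψ_T} · s_{Γ'}^{Ψ_V}`. -/
theorem symFactor_mul_of_disjoint_support (e₁ e₂ : ℕ →₀ ℕ)
    (hdisj : Disjoint e₁.support e₂.support)
    (L₁ L₂ : List (ℕ →₀ ℕ)) (hL₁ : L₁ ≠ []) (hL₂ : L₂ ≠ [])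
    (hsupp₁ : ∀ d ∈ L₁, d ≠ 0 ∧ d.support ⊆ e₁.support)
    (hsupp₂ : ∀ d ∈ L₂, d ≠ 0 ∧ d.support ⊆ e₂.support) :
    symFactor (L₁ ++ L₂) (monomial (e₁ + e₂) 1) =
      symFactor L₁ (monomial e₁ 1) * symFactor L₂ (monomial e₂ 1) := by
  have hL : ∀ d ∈ L₁ ++ L₂, d ≠ 0 := by
    intro d hd
    rcases List.mem_append.1 hd with h | h
    exacts [(hsupp₁ d h).1, (hsupp₂ d h).1]
  have hL₁₂ : L₁.Disjoint L₂ := fun d h₁ h₂ => (hsupp₁ d h₁).1 <| Finsupp.support_eq_empty.1 <|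
    Finset.subset_empty.1 fun _ hi => (Finset.disjoint_left.1 hdisj
      ((hsupp₁ d h₁).2 hi) ((hsupp₂ d h₂).2 hi)).elim
  rw [symFactor, symFactor, symFactor, stabCard_append hL₁₂,
    tensorCoeff_monomial _ (by simp [hL₁]) hL,
    tensorCoeff_monomial _ hL₁ fun d hd => (hsupp₁ d hd).1,
    tensorCoeff_monomial _ hL₂ fun d hd => (hsupp₂ d hd).1, List.sum_append,
    factorialProd_add_of_disjoint hdisj, List.map_append, List.prod_append]
  simp only [Finsupp.add_eq_add_iff_of_support_subset hdisj
      (Finsupp.support_list_sum_subset fun d hd => (hsupp₁ d hd).2)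
      (Finsupp.support_list_sum_subset fun d hd => (hsupp₂ d hd).2)]
  split_ifs <;> simp_all [div_mul_div_comm]
end
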